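/- arXiv:2505.13902 — 2 statements merged into one kernel-verified Lean document; each statement's English description precedes it below -/
import Mathlib

section
/- Let β > 0 be real and suppose sequences satisfy G'_n = L + (1/n)·(λ/β + (1/2)·Ξ_n) + o(1/n), T'_n = L_n + (1/n)·(λ/β - (1/2)·Ξ_n) + o(1/n), G_n = L + (1/n)·(λ/β + (1/2)·Ξ_n - (1/2)·ρ_n) + o(1/n) and T_n = L_n + (1/n)·(λ/β - (1/2)·Ξ_n - (1/2)·ρ_n) + o(1/n), where L_n = L (deterministic). Then G_n - T_n = (1/n)·Ξ_n + o(1/n) and T'_n - T_n = (1/(2n))·ρ_n + o(1/n); hence if Ξ_n = β·ρ_n + o(1), it follows that G_n - T_n = 2β·(T'_n - T_n) + o(1/n). -/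
open Filter Asymptotics Real

theorem stmt13 (β : ℝ) (hβ : 0 < β) (G T G' T' Ξ ρ : ℕ → ℝ) (L lam : ℝ)
    (hG' : (fun n : ℕ => G' n - (L + (1 / (n : ℝ)) * (lam / β + (1 / 2) * Ξ n)))
      =o[atTop] (fun n : ℕ => 1 / (n : ℝ)))
    (hT' : (fun n : ℕ => T' n - (L + (1 / (n : ℝ)) * (lam / β - (1 / 2) * Ξ n)))
      =o[atTop] (fun n : ℕ => 1 / (n : ℝ)))
    (hG : (fun n : ℕ => G n - (L + (1 / (n : ℝ)) * (lam / β + (1 / 2) * Ξ n - (1 / 2) * ρ n)))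
      =o[atTop] (fun n : ℕ => 1 / (n : ℝ)))
    (hT : (fun n : ℕ => T n - (L + (1 / (n : ℝ)) * (lam / β - (1 / 2) * Ξ n - (1 / 2) * ρ n)))
      =o[atTop] (fun n : ℕ => 1 / (n : ℝ))) :
    ((fun n : ℕ => G n - T n - (1 / (n : ℝ)) * Ξ n) =o[atTop] (fun n : ℕ => 1 / (n : ℝ))) ∧
    ((fun n : ℕ => T' n - T n - (1 / (2 * (n : ℝ))) * ρ n) =o[atTop] (fun n : ℕ => 1 / (n : ℝ))) ∧
    ((fun n => Ξ n - β * ρ n) =o[atTop] (fun _ : ℕ => (1 : ℝ)) →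
      (fun n : ℕ => G n - T n - 2 * β * (T' n - T n)) =o[atTop] (fun n : ℕ => 1 / (n : ℝ))) := by
  have h1 : (fun n : ℕ => G n - T n - (1 / (n : ℝ)) * Ξ n)
      =o[atTop] (fun n : ℕ => 1 / (n : ℝ)) := by
    have := hG.sub hT
    refine this.congr_left fun n => by ring
  have h2 : (fun n : ℕ => T' n - T n - (1 / (2 * (n : ℝ))) * ρ n)
      =o[atTop] (fun n : ℕ => 1 / (n : ℝ)) := by
    have := hT'.sub hT
    refine this.congr_left fun n => by
      rcases eq_or_ne (n : ℝ) 0 with h | h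
      · simp [h]
      · field_simp
        ring
  refine ⟨h1, h2, fun hΞρ => ?_⟩
  have h3 : (fun n : ℕ => (1 / (n : ℝ)) * (Ξ n - β * ρ n))
      =o[atTop] (fun n : ℕ => 1 / (n : ℝ)) := by
    have := (isBigO_refl (fun n : ℕ => 1 / (n : ℝ)) atTop).mul_isLittleO hΞρ
    simpa using this
  have := (h1.sub ((h2.const_mul_left (2 * β)))).add h3
  refine this.congr_left fun n => by
    rcases eq_or_ne (n : ℝ) 0 with h | h
    · simp [h]
    · field_simp
      ring
end

section
/- Under the hypotheses G'_n = L + (1/n)·(λ/β + (1/2)·Ξ_n) + o(1/n), T'_n = L + (1/n)·(λ/β - (1/2)·Ξ_n) + o(1/n), T_n = L + (1/n)·(λ/β - (1/2)·Ξ_n - (1/2)·ρ_n) + o(1/n), and Ξ_n = β·ρ_n + o(1): G'_n - T'_n = 2β·(T'_n - T_n) + o(1/n). -/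
open Filter Asymptotics Real

theorem stmt14 (β : ℝ) (hβ : 0 < β) (T G' T' Ξ ρ : ℕ → ℝ) (L lam : ℝ)
    (hG' : (fun n : ℕ => G' n - (L + (1 / (n : ℝ)) * (lam / β + (1 / 2) * Ξ n)))
      =o[atTop] (fun n : ℕ => 1 / (n : ℝ)))
    (hT' : (fun n : ℕ => T' n - (L + (1 / (n : ℝ)) * (lam / β - (1 / 2) * Ξ n)))
      =o[atTop] (fun n : ℕ => 1 / (n : ℝ)))
    (hT : (fun n : ℕ => T n - (L + (1 / (n : ℝ)) * (lam / β - (1 / 2) * Ξ n - (1 / 2) * ρ n)))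
      =o[atTop] (fun n : ℕ => 1 / (n : ℝ)))
    (hΞρ : (fun n => Ξ n - β * ρ n) =o[atTop] (fun _ : ℕ => (1 : ℝ)))
    (hΞO : Ξ =O[atTop] (fun _ : ℕ => (1 : ℝ)))
    (hρO : ρ =O[atTop] (fun _ : ℕ => (1 : ℝ))) :
    (fun n : ℕ => G' n - T' n - 2 * β * (T' n - T n)) =o[atTop] (fun n : ℕ => 1 / (n : ℝ)) := by
  have h1 := hG'.sub (hT'.const_mul_left (1 + 2*β))
  have h2 := h1.add (hT.const_mul_left (2*β))
  have h3 : (fun n : ℕ => (1/(n:ℝ)) * (Ξ n - β * ρ n)) =o[atTop] (fun n : ℕ => 1/(n:ℝ)) := by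
    simpa using (isBigO_refl (fun n : ℕ => 1/(n:ℝ)) atTop).mul_isLittleO hΞρ
  have h4 := h2.add h3
  refine h4.congr' ?_ (EventuallyEq.refl _ _)
  filter_upwards with n
  ring
end
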